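/- arXiv:2401.05853 — 2 statements merged into one kernel-verified Lean document; each statement's English description precedes it below -/
import Mathlib

section
/- Let $p\equiv 3\pmod 4$ be a prime and $\zeta = e^{2\pi i/p}$. Then $\prod_{1\le j<k\le (p-1)/2}(\zeta^{j^2}-\zeta^{k^2})^2 = (-p)^{(p-3)/4}$. -/
open Finset

/-!
Let `ψ` be the additive character `a ↦ ζ ^ a` of `ZMod p` and `S` the set of nonzero squares,
which `j ↦ j ^ 2` enumerates bijectively from `1, …, (p - 1) / 2`. Squaring the product over
`j < k` turns it into `(-1) ^ ((p - 1) / 2).choose 2 = (-1) ^ ((p - 3) / 4)` times the product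
of `ψ a - ψ b` over ordered pairs of distinct `a, b ∈ S`, which by symmetry is also the product
of `ψ b - ψ a = ψ b * (1 - ψ (a - b))`.
Since `-1` is not a square mod `p`, rescaling by squares and swapping the pair show that every
`s ≠ 0` is a difference `a - b` in the same number `(p - 3) / 4` of ways, so the factors
`1 - ψ (a - b)` multiply to `(∏_{s ≠ 0} (1 - ψ s)) ^ ((p - 3) / 4) = p ^ ((p - 3) / 4)`
(evaluate `∏_{s ≠ 0} (X - ψ s) = 1 + X + ⋯ + X ^ (p - 1)` at `1`).
The factors `ψ b` multiply to `ψ ((#S - 1) * ∑ S) = 1`: multiplying by a square `c ≠ 1`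
permutes `S`, so `∑ S = 0` unless `S = {1}`.
-/

namespace Finset

variable {ι κ M R : Type*}

lemma prod_Icc_prod_Ioc [CommMonoid M] (a b : ℕ) (g : ℕ → ℕ → M) :
    ∏ j ∈ Icc a b, ∏ k ∈ Ioc j b, g j k =
      ∏ x ∈ Icc a b ×ˢ Icc a b with x.1 < x.2, g x.1 x.2 :=
  (prod_finset_product' _ _ _ fun x => by
    simp only [mem_filter, mem_product, mem_Icc, mem_Ioc]
    omega).symm

lemma prod_offDiag_swap [DecidableEq ι] [CommMonoid M] (s : Finset ι) (g : ι × ι → M) :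
    ∏ x ∈ s.offDiag, g x.swap = ∏ x ∈ s.offDiag, g x :=
  prod_nbij' Prod.swap Prod.swap (by simp +contextual [ne_comm]) (by simp +contextual [ne_comm])
    (by simp) (by simp) (fun _ _ => rfl)

lemma prod_offDiag_eq_prod_filter_lt [DecidableEq ι] [LinearOrder ι] [CommMonoid M]
    (s : Finset ι) (g : ι × ι → M) :
    ∏ x ∈ s.offDiag, g x = ∏ x ∈ s ×ˢ s with x.1 < x.2, g x * g x.swap := by
  have hlt : {x ∈ s.offDiag | x.1 < x.2} = {x ∈ s ×ˢ s | x.1 < x.2} := by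
    ext x; simp +contextual [mem_offDiag, ne_of_lt]
  rw [← prod_filter_mul_prod_filter_not s.offDiag (fun x => x.1 < x.2), prod_mul_distrib, hlt]
  congr 1
  refine prod_nbij' Prod.swap Prod.swap ?_ ?_ (by simp) (by simp) (fun _ _ => rfl)
  · intro x hx
    simp only [mem_filter, mem_offDiag, mem_product, Prod.fst_swap, Prod.snd_swap] at hx ⊢
    exact ⟨⟨hx.1.2.1, hx.1.1⟩, lt_of_le_of_ne (not_lt.mp hx.2) hx.1.2.2.symm⟩
  · intro x hx
    simp only [mem_filter, mem_offDiag, mem_product, Prod.fst_swap, Prod.snd_swap] at hx ⊢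
    exact ⟨⟨hx.1.2, hx.1.1, hx.2.ne'⟩, not_lt.mpr hx.2.le⟩

lemma prod_filter_lt_sub_sq [DecidableEq ι] [LinearOrder ι] [CommRing R] (s : Finset ι)
    (f : ι → R) :
    ∏ x ∈ s ×ˢ s with x.1 < x.2, (f x.1 - f x.2) ^ 2 =
      (-1) ^ (#s).choose 2 * ∏ x ∈ s.offDiag, (f x.1 - f x.2) := by
  rw [prod_offDiag_eq_prod_filter_lt, ← card_product_filter_lt, ← prod_const,
    ← prod_mul_distrib]
  refine prod_congr rfl fun x _ => ?_
  simp only [Prod.fst_swap, Prod.snd_swap]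
  ring

lemma prod_offDiag_image [DecidableEq ι] [DecidableEq κ] [CommMonoid M] {s : Finset ι}
    {f : ι → κ} (hf : Set.InjOn f s) (g : κ → κ → M) :
    ∏ x ∈ (s.image f).offDiag, g x.1 x.2 = ∏ x ∈ s.offDiag, g (f x.1) (f x.2) := by
  refine (prod_nbij (Prod.map f f) ?_ ?_ ?_ fun _ _ => rfl).symm
  · intro x hx
    simp only [mem_offDiag, mem_image, Prod.map_fst, Prod.map_snd] at hx ⊢
    exact ⟨⟨x.1, hx.1, rfl⟩, ⟨x.2, hx.2.1, rfl⟩, hf.ne hx.1 hx.2.1 hx.2.2⟩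
  · intro x hx y hy hxy
    simp only [coe_offDiag, Set.mem_offDiag, mem_coe] at hx hy
    exact Prod.ext (hf hx.1 hy.1 (congrArg Prod.fst hxy))
      (hf hx.2.1 hy.2.1 (congrArg Prod.snd hxy))
  · rintro ⟨_, _⟩ hy
    simp only [coe_offDiag, Set.mem_offDiag, mem_coe, mem_image] at hy
    obtain ⟨⟨a, ha, rfl⟩, ⟨b, hb, rfl⟩, hab⟩ := hy
    exact ⟨(a, b), by simpa using ⟨ha, hb, ne_of_apply_ne f hab⟩, rfl⟩

lemma sum_offDiag_snd [DecidableEq ι] [CommRing R] (s : Finset ι) (f : ι → R) :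
    ∑ x ∈ s.offDiag, f x.2 = (#s - 1 : R) * ∑ b ∈ s, f b := by
  rw [sum_finset_product (f := fun x => f x.2) _ s (fun a => s.erase a)
    (by simp [and_comm, ne_comm])]
  simp only [sum_congr rfl fun c hc => sum_erase_eq_sub hc, sum_sub_distrib, sum_const,
    nsmul_eq_mul]
  ring

end Finset

lemma AddChar.map_sum_eq_prod {ι A M : Type*} [AddCommMonoid A] [CommMonoid M] (ψ : AddChar A M)
    (s : Finset ι) (f : ι → A) : ψ (∑ i ∈ s, f i) = ∏ i ∈ s, ψ (f i) :=
  map_prod ψ.toMonoidHom (fun i => Multiplicative.ofAdd (f i)) s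

lemma IsPrimitiveRoot.prod_one_sub_pow {R : Type*} [CommRing R] [IsDomain R] {ζ : R} {n : ℕ}
    (hζ : IsPrimitiveRoot ζ n) (hn : 0 < n) : ∏ i ∈ (range n).erase 0, (1 - ζ ^ i) = n := by
  open Polynomial in
  have hfactor : (∑ i ∈ range n, X ^ i) * (X - C 1) =
      (∏ i ∈ (range n).erase 0, (X - C (ζ ^ i))) * (X - C 1) := by
    rw [C_1, geom_sum_mul, ← C_1, X_pow_sub_C_eq_prod hζ hn (one_pow n),
      ← prod_erase_mul _ _ (mem_range.mpr hn)]
    simp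
  have h := congrArg (eval 1) (mul_right_cancel₀ (X_sub_C_ne_zero 1) hfactor)
  simpa [eval_prod] using h.symm

lemma ZMod.prod_one_sub_zmodChar {R : Type*} [CommRing R] [IsDomain R] {ζ : R} {n : ℕ}
    [NeZero n] (hζ : IsPrimitiveRoot ζ n) :
    ∏ s ∈ univ.erase (0 : ZMod n), (1 - AddChar.zmodChar n hζ.pow_eq_one s) = n := by
  rw [← hζ.prod_one_sub_pow (NeZero.pos n)]
  refine prod_nbij' ZMod.val (fun i => (i : ZMod n)) ?_ ?_ ?_ ?_ fun s _ => by
    rw [AddChar.zmodChar_apply]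
  · intro s hs
    simp only [mem_erase, mem_univ, and_true, mem_range] at hs ⊢
    exact ⟨(ZMod.val_ne_zero s).mpr hs, ZMod.val_lt s⟩
  · intro i hi
    simp only [mem_erase, mem_range, mem_univ, and_true] at hi ⊢
    rw [ne_eq, ← ZMod.val_eq_zero, ZMod.val_cast_of_lt hi.2]
    exact hi.1
  · intro s _
    exact ZMod.natCast_zmod_val s
  · intro i hi
    exact ZMod.val_cast_of_lt (mem_range.mp (mem_of_mem_erase hi))

namespace FiniteField

variable {F : Type*} [Field F] [Fintype F] [DecidableEq F]

variable (F) in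
open scoped Classical in
noncomputable def nonzeroSquares : Finset F := {a | a ≠ 0 ∧ IsSquare a}

@[simp]
lemma mem_nonzeroSquares {a : F} : a ∈ nonzeroSquares F ↔ a ≠ 0 ∧ IsSquare a := by
  simp [nonzeroSquares]

lemma mul_mem_nonzeroSquares {a b : F} (ha : a ∈ nonzeroSquares F) (hb : b ∈ nonzeroSquares F) :
    a * b ∈ nonzeroSquares F := by
  rw [mem_nonzeroSquares] at *
  exact ⟨mul_ne_zero ha.1 hb.1, ha.2.mul hb.2⟩

lemma inv_mem_nonzeroSquares {a : F} (ha : a ∈ nonzeroSquares F) :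
    a⁻¹ ∈ nonzeroSquares F := by
  rw [mem_nonzeroSquares] at *
  exact ⟨inv_ne_zero ha.1, ha.2.inv⟩

lemma sum_mul_nonzeroSquares {c : F} (hc : c ∈ nonzeroSquares F) :
    ∑ a ∈ nonzeroSquares F, c * a = ∑ a ∈ nonzeroSquares F, a := by
  have hc0 := (mem_nonzeroSquares.mp hc).1
  refine sum_nbij' (c * ·) (c⁻¹ * ·) (fun a ha => mul_mem_nonzeroSquares hc ha)
    (fun a ha => mul_mem_nonzeroSquares (inv_mem_nonzeroSquares hc) ha)
    (fun a _ => by simp [hc0]) (fun a _ => by simp [hc0]) (fun _ _ => rfl)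

lemma neg_mem_nonzeroSquares_iff (hF : Fintype.card F % 4 = 3) {a : F} (ha : a ≠ 0) :
    -a ∈ nonzeroSquares F ↔ a ∉ nonzeroSquares F := by
  have hχ : quadraticChar F (-a) = -quadraticChar F a := by
    rw [neg_eq_neg_one_mul, map_mul, quadraticChar_neg_one_iff_not_isSquare.mpr
      (by rw [FiniteField.isSquare_neg_one_iff]; exact not_not.mpr hF), neg_one_mul]
  rw [mem_nonzeroSquares, mem_nonzeroSquares, ← quadraticChar_one_iff_isSquare ha,
    ← quadraticChar_one_iff_isSquare (neg_ne_zero.mpr ha), hχ]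
  rcases quadraticChar_dichotomy ha with h | h <;> simp [h, ha]

lemma card_nonzeroSquares (hF : Fintype.card F % 4 = 3) :
    #(nonzeroSquares F) = (Fintype.card F - 1) / 2 := by
  have hsplit := card_filter_add_card_filter_not (s := univ.erase (0 : F))
    (· ∈ nonzeroSquares F)
  have hsq : (univ.erase (0 : F)).filter (· ∈ nonzeroSquares F) = nonzeroSquares F := by
    ext a; simp +contextual [mem_nonzeroSquares]
  have hnonsq : #((univ.erase (0 : F)).filter (· ∉ nonzeroSquares F)) = #(nonzeroSquares F) := by
    refine card_nbij' Neg.neg Neg.neg (fun a ha => ?_) (fun a ha => ?_)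
      (fun a _ => neg_neg a) (fun a _ => neg_neg a)
    · simp only [coe_filter, mem_erase, mem_univ, and_true, Set.mem_ofPred_eq] at ha
      exact (neg_mem_nonzeroSquares_iff hF ha.1).mpr ha.2
    · have ha0 := (mem_nonzeroSquares.mp ha).1
      simp only [coe_filter, mem_erase, mem_univ, and_true, Set.mem_ofPred_eq, ne_eq, neg_eq_zero]
      exact ⟨ha0, (neg_mem_nonzeroSquares_iff hF (neg_ne_zero.mpr ha0)).mp (by rwa [neg_neg])⟩
  rw [hsq, hnonsq, card_erase_of_mem (mem_univ _), card_univ] at hsplit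
  omega

lemma sum_offDiag_nonzeroSquares_snd (hF : Fintype.card F % 4 = 3) :
    ∑ x ∈ (nonzeroSquares F).offDiag, x.2 = 0 := by
  rw [sum_offDiag_snd _ fun b => b]
  have hcard := card_nonzeroSquares hF
  rcases (show #(nonzeroSquares F) = 1 ∨ 1 < #(nonzeroSquares F) by omega) with h1 | h1
  · simp [h1]
  · obtain ⟨c, hc, hc1⟩ := exists_mem_ne h1 1
    have hmul := sum_mul_nonzeroSquares hc
    rw [← mul_sum] at hmul
    have hsum : ∑ a ∈ nonzeroSquares F, a = 0 := by
      by_contra hsum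
      exact hc1 ((mul_eq_right₀ hsum).mp hmul)
    simp [hsum]

variable (F) in
noncomputable def squareDiffReps (s : F) : Finset (F × F) :=
  {x ∈ (nonzeroSquares F).offDiag | x.1 - x.2 = s}

lemma card_squareDiffReps_neg (s : F) : #(squareDiffReps F (-s)) = #(squareDiffReps F s) := by
  refine card_nbij' Prod.swap Prod.swap (fun x hx => ?_) (fun x hx => ?_)
    (fun x _ => Prod.swap_swap x) (fun x _ => Prod.swap_swap x) <;>
  · simp only [squareDiffReps, coe_filter, mem_offDiag, Set.mem_ofPred_eq, Prod.fst_swap,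
      Prod.snd_swap] at hx ⊢
    exact ⟨⟨hx.1.2.1, hx.1.1, hx.1.2.2.symm⟩, by linear_combination -hx.2⟩

lemma card_squareDiffReps_mul {c : F} (hc : c ∈ nonzeroSquares F) (s : F) :
    #(squareDiffReps F (c * s)) = #(squareDiffReps F s) := by
  have hc0 := (mem_nonzeroSquares.mp hc).1
  have hc' := inv_mem_nonzeroSquares hc
  refine card_nbij' (fun x => (c⁻¹ * x.1, c⁻¹ * x.2)) (fun x => (c * x.1, c * x.2))
    (fun x hx => ?_) (fun x hx => ?_) (fun x _ => by simp [hc0]) (fun x _ => by simp [hc0])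
  all_goals
    simp only [squareDiffReps, coe_filter, mem_offDiag, Set.mem_ofPred_eq, ne_eq,
      mul_right_inj' hc0, mul_right_inj' (inv_ne_zero hc0)] at hx ⊢
    obtain ⟨⟨h1, h2, h12⟩, hd⟩ := hx
    refine ⟨⟨mul_mem_nonzeroSquares ‹_› h1, mul_mem_nonzeroSquares ‹_› h2, h12⟩, ?_⟩
  · rw [← mul_sub, hd, inv_mul_cancel_left₀ hc0]
  · rw [← mul_sub, hd]

lemma card_squareDiffReps_eq (hF : Fintype.card F % 4 = 3) {s t : F} (hs : s ≠ 0) (ht : t ≠ 0) :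
    #(squareDiffReps F t) = #(squareDiffReps F s) := by
  by_cases hsq : t / s ∈ nonzeroSquares F
  · simpa only [div_mul_cancel₀ t hs] using card_squareDiffReps_mul hsq s
  · rw [← neg_mem_nonzeroSquares_iff hF (div_ne_zero ht hs)] at hsq
    simpa only [neg_mul, div_mul_cancel₀ t hs, card_squareDiffReps_neg]
      using card_squareDiffReps_mul hsq s

lemma card_squareDiffReps (hF : Fintype.card F % 4 = 3) {s : F} (hs : s ≠ 0) :
    #(squareDiffReps F s) = (Fintype.card F - 3) / 4 := by
  have htotal : #(nonzeroSquares F).offDiag = ∑ t ∈ univ.erase 0, #(squareDiffReps F t) :=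
    card_eq_sum_card_fiberwise fun x hx =>
      mem_erase.mpr ⟨sub_ne_zero.mpr (mem_offDiag.mp hx).2.2, mem_univ _⟩
  rw [sum_congr rfl fun t ht => card_squareDiffReps_eq hF hs (ne_of_mem_erase ht), sum_const,
    card_erase_of_mem (mem_univ _), card_univ, smul_eq_mul, offDiag_card,
    card_nonzeroSquares hF] at htotal
  obtain ⟨k, hk⟩ : ∃ k, Fintype.card F = 4 * k + 3 := ⟨Fintype.card F / 4, by omega⟩
  rw [hk, show (4 * k + 3 - 1) / 2 = 2 * k + 1 by omega, show 4 * k + 3 - 1 = 4 * k + 2 by omega,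
    ← Nat.mul_sub_one, Nat.add_sub_cancel] at htotal
  rw [hk, show (4 * k + 3 - 3) / 4 = k by omega]
  refine Nat.eq_of_mul_eq_mul_left (show 0 < 4 * k + 2 by omega) ?_
  rw [← htotal]
  ring

lemma prod_offDiag_nonzeroSquares_sub {R : Type*} [CommRing R] (hF : Fintype.card F % 4 = 3)
    (ψ : AddChar F R) :
    ∏ x ∈ (nonzeroSquares F).offDiag, (ψ x.1 - ψ x.2) =
      (∏ s ∈ univ.erase 0, (1 - ψ s)) ^ ((Fintype.card F - 3) / 4) := by
  calc ∏ x ∈ (nonzeroSquares F).offDiag, (ψ x.1 - ψ x.2)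
      = ∏ x ∈ (nonzeroSquares F).offDiag, (ψ x.2 - ψ x.1) :=
        (prod_offDiag_swap _ fun x => ψ x.1 - ψ x.2).symm
    _ = ∏ x ∈ (nonzeroSquares F).offDiag, ψ x.2 * (1 - ψ (x.1 - x.2)) :=
        prod_congr rfl fun x _ => by rw [mul_one_sub, ← AddChar.map_add_eq_mul, add_sub_cancel]
    _ = ∏ x ∈ (nonzeroSquares F).offDiag, (1 - ψ (x.1 - x.2)) := by
        rw [prod_mul_distrib, ← AddChar.map_sum_eq_prod, sum_offDiag_nonzeroSquares_snd hF,
          AddChar.map_zero_eq_one, one_mul]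
    _ = ∏ s ∈ univ.erase 0, ∏ x ∈ squareDiffReps F s, (1 - ψ s) := by
        rw [← prod_fiberwise_of_maps_to (g := fun x : F × F => x.1 - x.2)
          (fun x hx => mem_erase.mpr ⟨sub_ne_zero.mpr (mem_offDiag.mp hx).2.2, mem_univ _⟩)]
        refine prod_congr rfl fun s _ => prod_congr rfl fun x hx => ?_
        rw [(mem_filter.mp hx).2]
    _ = _ := by
        rw [← prod_pow]
        exact prod_congr rfl fun s hs => by
          rw [prod_const, card_squareDiffReps hF (ne_of_mem_erase hs)]

end FiniteField

lemma Nat.choose_two_half_of_mod_four_eq_three {n : ℕ} (hn : n % 4 = 3) :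
    ((n - 1) / 2).choose 2 = (n - 3) / 4 + 2 * ((n - 3) / 4) ^ 2 := by
  obtain ⟨k, rfl⟩ : ∃ k, n = 4 * k + 3 := ⟨n / 4, by omega⟩
  rw [show (4 * k + 3 - 1) / 2 = 2 * k + 1 by omega, show (4 * k + 3 - 3) / 4 = k by omega,
    Nat.choose_two_right, Nat.add_sub_cancel,
    show (2 * k + 1) * (2 * k) = 2 * (k + 2 * k ^ 2) by ring, Nat.mul_div_cancel_left _ two_pos]

namespace ZMod

variable {p : ℕ} [Fact p.Prime]

lemma injOn_natCast_sq : Set.InjOn (fun j : ℕ => (j : ZMod p) ^ 2) (Icc 1 ((p - 1) / 2)) := by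
  intro j hj k hk hjk
  simp only [coe_Icc, Set.mem_Icc] at hj hk
  have hhalf : ∀ i ≤ (p - 1) / 2, (i : ZMod p).valMinAbs.natAbs = i := fun i hi => by
    rw [valMinAbs_natCast_of_le_half (by omega), Int.natAbs_natCast]
  rw [← hhalf j hj.2, ← hhalf k hk.2]
  exact natAbs_valMinAbs_eq_natAbs_valMinAbs.mpr (sq_eq_sq_iff_eq_or_eq_neg.mp hjk)

lemma image_natCast_sq_Icc (hp : p ≠ 2) :
    (Icc 1 ((p - 1) / 2)).image (fun j : ℕ => (j : ZMod p) ^ 2) =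
      FiniteField.nonzeroSquares (ZMod p) := by
  ext a
  simp only [mem_image, mem_Icc, FiniteField.mem_nonzeroSquares]
  constructor
  · rintro ⟨j, hj, rfl⟩
    refine ⟨pow_ne_zero 2 ?_, j, sq _⟩
    rw [Ne, natCast_eq_zero_iff]
    exact Nat.not_dvd_of_pos_of_lt hj.1 (by omega)
  · rintro ⟨ha, x, rfl⟩
    have hodd := (Fact.out : p.Prime).eq_two_or_odd
    refine ⟨x.valMinAbs.natAbs, ⟨?_, (natAbs_valMinAbs_le x).trans (by omega)⟩, ?_⟩
    · rw [Nat.one_le_iff_ne_zero, Ne, Int.natAbs_eq_zero, valMinAbs_eq_zero]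
      rintro rfl
      simp at ha
    · rw [natCast_natAbs_valMinAbs]
      split_ifs <;> ring

end ZMod

/-- for `p ≡ 3 (mod 4)`,
`∏_{1≤j<k≤(p-1)/2} (ζ^{j²} - ζ^{k²})² = (-p)^{(p-3)/4}`. -/
theorem prod_diff_zeta_sq_eq_of_three_mod_four (p : ℕ) [Fact p.Prime] (hp : p % 4 = 3)
    (ζ : ℂ) (hζ : ζ = Complex.exp (2 * Real.pi * Complex.I / p)) :
    ∏ j ∈ Finset.Icc 1 ((p - 1) / 2), ∏ k ∈ Finset.Ioc j ((p - 1) / 2),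
        (ζ ^ (j ^ 2) - ζ ^ (k ^ 2)) ^ 2 =
      (-(p : ℂ)) ^ ((p - 3) / 4) := by
  have hprim : IsPrimitiveRoot ζ p :=
    hζ ▸ Complex.isPrimitiveRoot_exp p (Fact.out : p.Prime).ne_zero
  set ψ := AddChar.zmodChar p hprim.pow_eq_one
  have hψ (j : ℕ) : ζ ^ (j ^ 2) = ψ ((j : ZMod p) ^ 2) := by
    rw [← Nat.cast_pow, AddChar.zmodChar_apply']
  calc _ = ∏ x ∈ Icc 1 ((p - 1) / 2) ×ˢ Icc 1 ((p - 1) / 2) with x.1 < x.2,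
          (ψ ((x.1 : ZMod p) ^ 2) - ψ ((x.2 : ZMod p) ^ 2)) ^ 2 := by
        simp only [hψ, prod_Icc_prod_Ioc]
    _ = (-1) ^ ((p - 1) / 2).choose 2 *
          ∏ x ∈ (FiniteField.nonzeroSquares (ZMod p)).offDiag, (ψ x.1 - ψ x.2) := by
        rw [prod_filter_lt_sub_sq _ fun j : ℕ => ψ ((j : ZMod p) ^ 2), Nat.card_Icc,
          Nat.add_sub_cancel, ← ZMod.image_natCast_sq_Icc (by omega),
          prod_offDiag_image ZMod.injOn_natCast_sq fun a b => ψ a - ψ b]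
    _ = (-1) ^ ((p - 3) / 4) * p ^ ((p - 3) / 4) := by
        rw [FiniteField.prod_offDiag_nonzeroSquares_sub (by rwa [ZMod.card]),
          ZMod.prod_one_sub_zmodChar hprim, ZMod.card, Nat.choose_two_half_of_mod_four_eq_three hp,
          pow_add, pow_mul, neg_one_sq, one_pow, mul_one]
    _ = _ := by rw [← mul_pow, neg_one_mul]
end

section
/- Let $p$ be an odd prime, $n=(p-1)/2$, $\zeta = e^{2\pi i/p}$, and let $\nu = (1,\dots,1)^T \in \mathbb{C}^{n+1}$. Let $B = [\zeta^{-ij^2}]_{0\le i,j\le n}$ and let $A$ be the matrix obtained from $[\zeta^{ij^2}]_{0\le i,j\le n}$ by replacing all entries in its first row by $0$. Then the matrix $\widetilde{M} = -\nu\nu^T + 2AB^T$ has first row all $-1$ and, for $1\le i\le n$, $(i,j)$-entry equal to $-1 + 2\sum_{k=0}^{n}\zeta^{(i-j)k^2}$, and $\det\widetilde{M} = -2^{n}\sum_{k=0}^{n}\det B^{(k)}\det A^{(k)}$, where $A^{(k)}$ (resp. $B^{(k)}$) is obtained from $A$ (resp. $B$) by replacing all entries of the $k$-th column by $1$. -/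
/-!
Write `M̃ = H + u νᵀ` with `H = 2ABᵀ` and `u = -ν`. The matrix determinant lemma
`det (H + u vᵀ) = det H + vᵀ adj(H) u` holds without invertibility of `H` (expand the determinant
row by row: only the terms with at most one row replaced by a multiple of `v` survive), and
`det H = 0` because the first row of `A` vanishes. Hence `det M̃ = -2ⁿ νᵀ adj(Bᵀ) adj(A) ν
= -2ⁿ (adj(B) ν) ⬝ (adj(A) ν)`, and by Cramer's rule the `k`-th coordinates of `adj(B) ν` and
`adj(A) ν` are `det B⁽ᵏ⁾` and `det A⁽ᵏ⁾`.
-/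

open Matrix Finset

namespace Matrix

variable {m R : Type*} [Fintype m] [DecidableEq m] [CommRing R]

theorem det_add_vecMulVec_eq_add_sum_updateRow (H : Matrix m m R) (u v : m → R) :
    (H + vecMulVec u v).det = H.det + ∑ k, u k * (H.updateRow k v).det := by
  suffices h : ∀ s : Finset m, ∀ (H : Matrix m m R) (u : m → R), (∀ i ∉ s, u i = 0) →
      (H + vecMulVec u v).det = H.det + ∑ k, u k * (H.updateRow k v).det from
    h univ H u (by simp)
  intro s
  induction s using Finset.induction_on with
  | empty =>
    intro H u hu
    obtain rfl : u = 0 := funext fun i => hu i (notMem_empty i)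
    simp
  | insert a s _ ih =>
    -- Split off the `a`-th coordinate of `u`. The induction hypothesis is used twice, the second
    -- time for `H.updateRow a v`, where every extra term has the row `v` twice.
    intro H u hu
    set u' := u - Pi.single a (u a)
    have hu' : ∀ i ∉ s, u' i = 0 := by
      intro i hi
      by_cases hia : i = a <;> simp_all [u']
    set G := H + vecMulVec u' v
    have hsplit : H + vecMulVec u v = G.updateRow a (G a + u a • v) := by
      ext i j
      by_cases hia : i = a <;> simp [G, u', vecMulVec_apply, updateRow_apply, hia]
    have hrow : G.updateRow a v = H.updateRow a v + vecMulVec u' v := by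
      ext i j
      by_cases hia : i = a <;> simp [G, u', vecMulVec_apply, updateRow_apply, hia]
    have hvanish : ∑ k, u' k * ((H.updateRow a v).updateRow k v).det = 0 := by
      refine sum_eq_zero fun k _ => ?_
      by_cases hka : k = a
      · simp [u', hka]
      · have hrows : ((H.updateRow a v).updateRow k v) k = ((H.updateRow a v).updateRow k v) a := by
          rw [updateRow_self, updateRow_ne (Ne.symm hka), updateRow_self]
        rw [det_zero_of_row_eq hka hrows, mul_zero]
    rw [hsplit, det_updateRow_add, updateRow_eq_self, det_updateRow_smul, hrow, ih _ _ hu',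
      ih _ _ hu', hvanish, add_zero]
    simp only [u', Pi.sub_apply, sub_mul, sum_sub_distrib, Pi.single_apply, ite_mul, zero_mul,
      sum_ite_eq', mem_univ, if_true]
    ring

theorem det_add_vecMulVec (H : Matrix m m R) (u v : m → R) :
    (H + vecMulVec u v).det = H.det + v ⬝ᵥ (adjugate H *ᵥ u) := by
  rw [det_add_vecMulVec_eq_add_sum_updateRow, dotProduct_mulVec, dotProduct_comm,
    ← mulVec_transpose, adjugate_transpose, ← cramer_eq_adjugate_mulVec]
  simp only [dotProduct, cramer_transpose_apply]

theorem dotProduct_adjugate_mul_transpose_mulVec (A B : Matrix m m R) (u v : m → R) :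
    v ⬝ᵥ (adjugate (A * Bᵀ) *ᵥ u) = B.cramer v ⬝ᵥ A.cramer u := by
  rw [adjugate_mul_distrib, ← mulVec_mulVec, dotProduct_mulVec, ← adjugate_transpose,
    vecMul_transpose, cramer_eq_adjugate_mulVec, cramer_eq_adjugate_mulVec]

end Matrix

theorem M_tilde_decomposition_general (p : ℕ)
    (n : ℕ)
    (ζ : ℂ) (hζ : ζ = Complex.exp (2 * Real.pi * Complex.I / p))
    (A B : Matrix (Fin (n + 1)) (Fin (n + 1)) ℂ)
    (hA : ∀ i j, A i j = if (i : ℕ) = 0 then 0 else ζ ^ ((i : ℕ) * (j : ℕ) ^ 2))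
    (hB : ∀ i j, B i j = ζ ^ (-((i : ℤ) * (j : ℤ) ^ 2)))
    (M : Matrix (Fin (n + 1)) (Fin (n + 1)) ℂ)
    (hMdef : M = -Matrix.vecMulVec (fun _ => 1) (fun _ => 1) + 2 • (A * Bᵀ)) :
    (∀ i j, M i j =
      if (i : ℕ) = 0 then -1
      else -1 + 2 * ∑ k ∈ Finset.range (n + 1),
        ζ ^ (((i : ℤ) - (j : ℤ)) * (k : ℤ) ^ 2)) ∧
    M.det = -(2 : ℂ) ^ n *
      ∑ k : Fin (n + 1),
        (B.updateCol k (fun _ => 1)).det * (A.updateCol k (fun _ => 1)).det := by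
  have hM : M = (2 : ℂ) • (A * Bᵀ) + vecMulVec (-fun _ => 1) (fun _ => 1) := by
    rw [hMdef, neg_vecMulVec, ofNat_smul_eq_nsmul (R := ℂ) 2]
    exact add_comm _ _
  refine ⟨fun i j => ?_, ?_⟩
  · split_ifs with hi
    · have hAi : ∀ k, A i k = 0 := fun k => by rw [hA, if_pos hi]
      simp [hM, hAi, vecMulVec_apply, mul_apply]
    · have hζ0 : ζ ≠ 0 := hζ ▸ Complex.exp_ne_zero _
      have hterm : ∀ k : Fin (n + 1), A i k * B j k = ζ ^ (((i : ℤ) - (j : ℤ)) * (k : ℤ) ^ 2) := by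
        intro k
        rw [hA, hB, if_neg hi, ← zpow_natCast, ← zpow_add₀ hζ0]
        push_cast
        ring_nf
      rw [hM, Matrix.add_apply, Matrix.smul_apply, mul_apply, ← Fin.sum_univ_eq_sum_range]
      simp [vecMulVec_apply, hterm, add_comm]
  · have hA0 : A.det = 0 := det_eq_zero_of_row_eq_zero 0 fun j => by simp [hA]
    rw [hM, det_add_vecMulVec, det_smul, det_mul, hA0, adjugate_smul, smul_mulVec,
      dotProduct_smul, dotProduct_adjugate_mul_transpose_mulVec, map_neg, dotProduct_neg]
    simp [dotProduct, cramer_apply]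

/-- the decomposition `M̃ = -ννᵀ + 2ABᵀ`, its entries, and
`det M̃ = -2ⁿ ∑ₖ det B⁽ᵏ⁾ det A⁽ᵏ⁾`. -/
theorem M_tilde_decomposition (p : ℕ) [Fact p.Prime] (hp : p ≠ 2)
    (n : ℕ) (hn : n = (p - 1) / 2)
    (ζ : ℂ) (hζ : ζ = Complex.exp (2 * Real.pi * Complex.I / p))
    (A B : Matrix (Fin (n + 1)) (Fin (n + 1)) ℂ)
    (hA : ∀ i j, A i j = if (i : ℕ) = 0 then 0 else ζ ^ ((i : ℕ) * (j : ℕ) ^ 2))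
    (hB : ∀ i j, B i j = ζ ^ (-((i : ℤ) * (j : ℤ) ^ 2)))
    (M : Matrix (Fin (n + 1)) (Fin (n + 1)) ℂ)
    (hMdef : M = -Matrix.vecMulVec (fun _ => 1) (fun _ => 1) + 2 • (A * Bᵀ)) :
    (∀ i j, M i j =
      if (i : ℕ) = 0 then -1
      else -1 + 2 * ∑ k ∈ Finset.range (n + 1),
        ζ ^ (((i : ℤ) - (j : ℤ)) * (k : ℤ) ^ 2)) ∧
    M.det = -(2 : ℂ) ^ n *
      ∑ k : Fin (n + 1),
        (B.updateCol k (fun _ => 1)).det * (A.updateCol k (fun _ => 1)).det :=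
  M_tilde_decomposition_general p n ζ hζ A B hA hB M hMdef
end
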